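/- Let p be an odd prime, let G = 𝒢_{Ã₂}(p), and let e ≥ 3 be an integer. Then there exists a surjective group homomorphism from G onto SL₃(𝔽_{p^e}), where 𝔽_{p^e} is the finite field with p^e elements. Moreover G has an infinite pro-p completion: for every natural number n there exist a finite p-group Q of cardinality greater than n and a surjective group homomorphism from G onto Q. -/

import Mathlib

/-- The commutator [x,y] = x⁻¹y⁻¹xy (the convention used in the paper). -/
def pc {G : Type*} [Group G] (x y : G) : G := x⁻¹ * y⁻¹ * x * y

/-- The relators of the Kac–Moody–Steinberg group 𝒢_{Ã₂}(p):
a^p, b^p, c^p, [a,b,a], [a,b,b], [b,c,b], [b,c,c], [a,c,a], [a,c,c]. -/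
def kmsA2Rels (p : ℕ) : Set (FreeGroup (Fin 3)) :=
  let a : FreeGroup (Fin 3) := FreeGroup.of 0
  let b : FreeGroup (Fin 3) := FreeGroup.of 1
  let c : FreeGroup (Fin 3) := FreeGroup.of 2
  {a ^ p, b ^ p, c ^ p,
   pc (pc a b) a, pc (pc a b) b,
   pc (pc b c) b, pc (pc b c) c,
   pc (pc a c) a, pc (pc a c) c}

/-- The Kac–Moody–Steinberg group 𝒢_{Ã₂}(p). -/
abbrev KMSA2 (p : ℕ) : Type := PresentedGroup (kmsA2Rels p)

/-!
Sending `a, b, c` to the root elements `x₀₁(α), x₁₂(β), x₂₀(γ)` of `SL₃(R)`, for any commutative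
ring `R` of characteristic `p`, respects the relations: `x^p = 1` since `p = 0` in `R`, and each of
`[x₀₁, x₁₂]`, `[x₁₂, x₂₀]`, `[x₀₁, x₂₀]` is a root element commuting with both of its factors.

Over a finite field `K` take `α = β = 1` and `γ` a generator of `Kˣ`. Since commutators of root
elements multiply their parameters, the image contains every root element, hence is all of
`SL₃(K)`.

Over `R = 𝔽_p[t]/(t^k)` take `α = β = γ = t`. The image lies in the kernel of reduction mod `t`,
whose elements `1 + tN` satisfy `(1 + tN)^(p^k) = 1`, so it is a finite `p`-group. It contains the
pairwise distinct elements `x₀₁(t^(3m+1))`, `3m + 1 < k`, so it grows without bound with `k`.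
-/

section Commutator

variable {G : Type*} [Group G]

theorem pc_eq_of_mul_eq {x y z : G} (h : x * y = y * x * z) : pc x y = z :=
  calc pc x y = (y * x)⁻¹ * (x * y) := by simp [pc, mul_assoc]
    _ = z := by rw [h, inv_mul_cancel_left]

theorem pc_eq_one_of_commute {x y : G} (h : Commute x y) : pc x y = 1 :=
  pc_eq_of_mul_eq (by rw [h.eq, mul_one])

theorem map_pc {H : Type*} [Group H] (f : G →* H) (x y : G) : f (pc x y) = pc (f x) (f y) := by
  simp [pc]

theorem pc_swap (x y : G) : pc y x = (pc x y)⁻¹ := by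
  simp [pc, mul_assoc]

theorem Subgroup.pc_mem {H : Subgroup G} {x y : G} (hx : x ∈ H) (hy : y ∈ H) : pc x y ∈ H :=
  H.mul_mem (H.mul_mem (H.mul_mem (H.inv_mem hx) (H.inv_mem hy)) hx) hy

end Commutator

theorem one_add_pow_char_pow_eq_one {A : Type*} [Ring A] (p : ℕ) [Fact p.Prime] [CharP A p]
    {x : A} {k : ℕ} (hx : x ^ k = 0) : (1 + x) ^ p ^ k = 1 := by
  rw [add_pow_char_pow_of_commute p k (Commute.one_left x), one_pow,
    pow_eq_zero_of_le (Nat.lt_pow_self (Fact.out : p.Prime).one_lt).le hx, add_zero]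

namespace Matrix.SpecialLinearGroup

section CommRing

variable {ι R : Type*} [Fintype ι] [DecidableEq ι] [CommRing R]

theorem transvection_commute {i j k l : ι} (hij : i ≠ j) (hkl : k ≠ l) (hjk : j ≠ k)
    (hli : l ≠ i) (u v : R) : Commute (transvection hij u) (transvection hkl v) := by
  refine Subtype.ext ?_
  simp only [coe_mul, transvection_coe, mul_add, add_mul, mul_one, one_mul,
    single_mul_single_of_ne _ _ _ _ hjk, single_mul_single_of_ne _ _ _ _ hli]
  abel

theorem pc_transvection_transvection {i j k : ι} (hij : i ≠ j) (hjk : j ≠ k) (hik : i ≠ k)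
    (u v : R) : pc (transvection hij u) (transvection hjk v) = transvection hik (u * v) := by
  refine pc_eq_of_mul_eq (Subtype.ext ?_)
  simp only [coe_mul, transvection_coe, mul_add, add_mul, mul_one, one_mul,
    single_mul_single_same, single_mul_single_of_ne _ _ _ _ hik.symm,
    single_mul_single_of_ne _ _ _ _ hij.symm, zero_mul]
  abel

theorem pc_transvection_transvection' {i j k : ι} (hij : i ≠ j) (hki : k ≠ i)
    (hkj : k ≠ j) (u v : R) :
    pc (transvection hij u) (transvection hki v) = transvection hkj (-(v * u)) := by
  rw [pc_swap, pc_transvection_transvection hki hij hkj, transvection_inv]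

theorem transvection_pow {i j : ι} (hij : i ≠ j) (u : R) (m : ℕ) :
    transvection hij u ^ m = transvection hij (m • u) := by
  induction m with
  | zero => simp
  | succ m ih => rw [pow_succ, ih, ← transvection_add, succ_nsmul]

theorem transvection_pow_char (p : ℕ) [CharP R p] {i j : ι} (hij : i ≠ j) (u : R) :
    transvection hij u ^ p = 1 := by
  rw [transvection_pow, nsmul_eq_mul, CharP.cast_eq_zero, zero_mul, transvection_coeff_zero]

theorem transvection_injective {i j : ι} (hij : i ≠ j) :
    Function.Injective (transvection hij : R → SpecialLinearGroup ι R) := by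
  intro u v h
  simpa [transvection_coe, hij] using congr(($h : Matrix ι ι R) i j)

theorem map_transvection {S : Type*} [CommRing S] (f : R →+* S) {i j : ι} (hij : i ≠ j) (u : R) :
    map f (transvection hij u) = transvection hij (f u) := by
  ext a b
  simp [transvection_coe, single_apply, one_apply, apply_ite f]

theorem transvection_mul_mem {H : Subgroup (SpecialLinearGroup ι R)} {i j k : ι} (hij : i ≠ j)
    (hjk : j ≠ k) (hik : i ≠ k) {u v : R} (hu : transvection hij u ∈ H)
    (hv : transvection hjk v ∈ H) : transvection hik (u * v) ∈ H :=
  pc_transvection_transvection hij hjk hik u v ▸ H.pc_mem hu hv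

theorem isPGroup_ker_map_mk_span_singleton (p : ℕ) [Fact p.Prime] [Nonempty ι] [CharP R p]
    {t : R} (ht : IsNilpotent t) :
    IsPGroup p (map (n := ι) (Ideal.Quotient.mk (Ideal.span {t}))).ker := by
  rintro ⟨M, hM⟩
  obtain ⟨k, hk⟩ := ht
  have hdvd : ∀ a b, t ∣ (M : Matrix ι ι R) a b - (1 : Matrix ι ι R) a b := fun a b ↦ by
    rw [← Ideal.mem_span_singleton, ← Ideal.Quotient.eq]
    simpa [one_apply, apply_ite (Ideal.Quotient.mk _)] using
      congrArg (fun g : SpecialLinearGroup ι _ ↦ g.1 a b) (MonoidHom.mem_ker.1 hM)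
  choose N hN using hdvd
  have hMN : (M : Matrix ι ι R) = 1 + t • Matrix.of N := by
    ext a b
    simp [← hN]
  refine ⟨k, Subtype.ext (Subtype.ext ?_)⟩
  rw [Subgroup.coe_pow, coe_pow, hMN]
  exact one_add_pow_char_pow_eq_one p (by rw [smul_pow, hk, zero_smul])

end CommRing

section Field

variable {ι F : Type*} [Fintype ι] [DecidableEq ι] [Field F]

theorem diag2n_eq_transvection_prod {i j : ι} (hij : i ≠ j) (a : F) (ha : a ≠ 0) :
    diag2n hij a ha = transvection hij a * transvection hij.symm (-a⁻¹) * transvection hij a *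
      transvection hij (-1) * transvection hij.symm 1 * transvection hij (-1) := by
  ext k l
  simp only [diag2n_coe, coe_mul, transvection_coe, mul_add, add_mul, mul_one, one_mul,
    single_mul_single_same, single_mul_single_of_ne _ _ _ _ hij,
    single_mul_single_of_ne _ _ _ _ hij.symm]
  simp [diagonal_apply, single_apply, one_apply]
  split_ifs <;> grind

theorem eq_top_of_forall_transvection_mem [Nontrivial ι] {H : Subgroup (SpecialLinearGroup ι F)}
    (h : ∀ (i j : ι) (hij : i ≠ j) (c : F), transvection hij c ∈ H) : H = ⊤ := by
  refine (Subgroup.eq_top_iff' H).2 fun M ↦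
    diagonal_transvection_induction' (· ∈ H) M (fun i j hij c hc ↦ ?_) h fun _ _ ↦ H.mul_mem
  rw [diag2n_eq_transvection_prod]
  repeat apply H.mul_mem
  all_goals exact h _ _ _ _

theorem forall_transvection_mem_of_forall_of_ne_zero {H : Subgroup (SpecialLinearGroup ι F)}
    {i j k : ι} (hij : i ≠ j) (hjk : j ≠ k) (hik : i ≠ k) {v : F} (hv : v ≠ 0)
    (h : ∀ c, transvection hij c ∈ H) (hv' : transvection hjk v ∈ H) (c : F) :
    transvection hik c ∈ H := by
  simpa [hv] using transvection_mul_mem hij hjk hik (h (c * v⁻¹)) hv'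

theorem forall_transvection_mem_of_ne_zero_of_forall {H : Subgroup (SpecialLinearGroup ι F)}
    {i j k : ι} (hij : i ≠ j) (hjk : j ≠ k) (hik : i ≠ k) {u : F} (hu : u ≠ 0)
    (hu' : transvection hij u ∈ H) (h : ∀ c, transvection hjk c ∈ H) (c : F) :
    transvection hik c ∈ H := by
  simpa [hu] using transvection_mul_mem hij hjk hik hu' (h (u⁻¹ * c))

end Field

end Matrix.SpecialLinearGroup

open Matrix.SpecialLinearGroup

local notation "E" i:max j:max c:max => transvection (by decide : (i : Fin 3) ≠ j) c

section KMS

variable (p : ℕ) {R : Type*} [CommRing R] [CharP R p]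

theorem kmsA2Rels_lift_eq_one (α β γ : R) :
    ∀ r ∈ kmsA2Rels p, FreeGroup.lift ![E 0 1 α, E 1 2 β, E 2 0 γ] r = 1 := by
  intro r hr
  simp only [kmsA2Rels, Set.mem_insert_iff, Set.mem_singleton_iff] at hr
  have hc : ![E 0 1 α, E 1 2 β, E 2 0 γ] 2 = E 2 0 γ := rfl
  rcases hr with rfl | rfl | rfl | rfl | rfl | rfl | rfl | rfl | rfl <;>
    simp only [map_pow, map_pc, FreeGroup.lift_apply_of, Matrix.cons_val_zero,
      Matrix.cons_val_one, hc]
  all_goals first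
    | exact transvection_pow_char p _ _
    | (rw [pc_transvection_transvection _ _ (by decide)]
       exact pc_eq_one_of_commute (transvection_commute _ _ (by decide) (by decide) _ _))
    | (rw [pc_transvection_transvection' _ _ (by decide)]
       exact pc_eq_one_of_commute (transvection_commute _ _ (by decide) (by decide) _ _))

def kmsHom (α β γ : R) : KMSA2 p →* Matrix.SpecialLinearGroup (Fin 3) R :=
  PresentedGroup.toGroup (kmsA2Rels_lift_eq_one p α β γ)

theorem kmsHom_of_zero (α β γ : R) : kmsHom p α β γ (PresentedGroup.of 0) = E 0 1 α :=
  PresentedGroup.toGroup.of _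

theorem kmsHom_of_one (α β γ : R) : kmsHom p α β γ (PresentedGroup.of 1) = E 1 2 β :=
  PresentedGroup.toGroup.of _

theorem kmsHom_of_two (α β γ : R) : kmsHom p α β γ (PresentedGroup.of 2) = E 2 0 γ :=
  PresentedGroup.toGroup.of _

theorem kmsHom_surjective {K : Type*} [Field K] [CharP K p] {ξ : Kˣ}
    (hξ : ∀ x : Kˣ, x ∈ Submonoid.powers ξ) : Function.Surjective (kmsHom p 1 1 (ξ : K)) := by
  set H := (kmsHom p 1 1 (ξ : K)).range
  have ha : E 0 1 (1 : K) ∈ H := ⟨_, kmsHom_of_zero p _ _ _⟩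
  have hb : E 1 2 (1 : K) ∈ H := ⟨_, kmsHom_of_one p _ _ _⟩
  have hc : E 2 0 (ξ : K) ∈ H := ⟨_, kmsHom_of_two p _ _ _⟩
  have h21 : E 2 1 (ξ : K) ∈ H := by simpa using transvection_mul_mem _ _ (by decide) hc ha
  have h10 : E 1 0 (ξ : K) ∈ H := by simpa using transvection_mul_mem _ _ (by decide) hb hc
  have h01 : ∀ c : K, E 0 1 c ∈ H := by
    have hpow : ∀ m : ℕ, E 0 1 ((ξ : K) ^ m) ∈ H := by
      intro m
      induction m with
      | zero => simpa using ha
      | succ m ih =>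
        rw [pow_succ]
        have h02 := transvection_mul_mem _ _ (by decide) ih hb
        rw [mul_one] at h02
        exact transvection_mul_mem _ _ (by decide) h02 h21
    intro c
    rcases eq_or_ne c 0 with rfl | hc0
    · simp
    · obtain ⟨m, hm⟩ := hξ (Units.mk0 c hc0)
      rw [← Units.val_mk0 hc0, ← hm, Units.val_pow_eq_pow_val]
      exact hpow m
  have hξ0 : (ξ : K) ≠ 0 := ξ.ne_zero
  have h02 : ∀ c : K, E 0 2 c ∈ H :=
    forall_transvection_mem_of_forall_of_ne_zero _ _ _ one_ne_zero h01 hb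
  have h21' : ∀ c : K, E 2 1 c ∈ H :=
    forall_transvection_mem_of_ne_zero_of_forall _ _ _ hξ0 hc h01
  have h12 : ∀ c : K, E 1 2 c ∈ H :=
    forall_transvection_mem_of_ne_zero_of_forall _ _ _ hξ0 h10 h02
  have h10' : ∀ c : K, E 1 0 c ∈ H :=
    forall_transvection_mem_of_forall_of_ne_zero _ _ _ hξ0 h12 hc
  have h20 : ∀ c : K, E 2 0 c ∈ H :=
    forall_transvection_mem_of_forall_of_ne_zero _ _ _ hξ0 h21' h10
  rw [← MonoidHom.range_eq_top]
  refine eq_top_of_forall_transvection_mem fun i j hij ↦ ?_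
  fin_cases i <;> fin_cases j <;> first | exact absurd rfl hij | assumption

theorem transvection_pow_mem_range_kmsHom (t : R) (m : ℕ) :
    E 0 1 (t ^ (3 * m + 1)) ∈ (kmsHom p t t t).range := by
  set H := (kmsHom p t t t).range
  have ha : E 0 1 t ∈ H := ⟨_, kmsHom_of_zero p _ _ _⟩
  have hb : E 1 2 t ∈ H := ⟨_, kmsHom_of_one p _ _ _⟩
  have hc : E 2 0 t ∈ H := ⟨_, kmsHom_of_two p _ _ _⟩
  have h02 : E 0 2 (t * t) ∈ H := transvection_mul_mem _ _ _ ha hb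
  induction m with
  | zero => simpa using ha
  | succ m ih =>
    have h21 : E 2 1 (t * t ^ (3 * m + 1)) ∈ H := transvection_mul_mem _ _ _ hc ih
    convert transvection_mul_mem _ _ (by decide) h02 h21 using 2
    ring

end KMS

open Polynomial in
theorem AdjoinRoot.root_X_pow_pow_injOn {R : Type*} [CommRing R] [Nontrivial R] (k : ℕ) :
    Set.InjOn (fun i : ℕ ↦ root (X ^ k : R[X]) ^ i) (Set.Iio k) := by
  intro a ha b hb hab
  let pb := powerBasis' (monic_X_pow (R := R) k)
  have hdim : pb.dim = k := by simp [pb]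
  have h : pb.basis ⟨a, hdim.symm ▸ ha⟩ = pb.basis ⟨b, hdim.symm ▸ hb⟩ := by
    rw [pb.basis_eq_pow, pb.basis_eq_pow]
    exact hab
  simpa using pb.basis.injective h

open Polynomial in
theorem exists_isPGroup_quotient_card_gt (p : ℕ) [Fact p.Prime] (n : ℕ) :
    ∃ (Q : Type) (_ : Group Q) (_ : Finite Q) (f : KMSA2 p →* Q),
      IsPGroup p Q ∧ Function.Surjective f ∧ n < Nat.card Q := by
  set k := 3 * n + 2
  let R := AdjoinRoot (X ^ k : (ZMod p)[X])
  let t : R := AdjoinRoot.root _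
  have : Nontrivial R :=
    AdjoinRoot.nontrivial _ (by rw [degree_X_pow]; exact_mod_cast k.succ_ne_zero)
  have : CharP R p := charP_of_injective_algebraMap (algebraMap (ZMod p) R).injective p
  have : Module.Finite (ZMod p) R := (AdjoinRoot.powerBasis' (monic_X_pow k)).finite
  have : Finite R := Module.finite_of_finite (ZMod p)
  have ht : t ^ k = 0 := by simp [t, ← AdjoinRoot.mk_X, ← map_pow, AdjoinRoot.mk_self]
  set f := kmsHom p t t t
  refine ⟨f.range, inferInstance, inferInstance, f.rangeRestrict, ?_,
    f.rangeRestrict_surjective, ?_⟩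
  · refine (isPGroup_ker_map_mk_span_singleton p ⟨k, ht⟩).to_le ((f.range_le_ker_iff _).2 ?_)
    refine PresentedGroup.ext fun i ↦ ?_
    fin_cases i <;> simp [f, kmsHom_of_zero, kmsHom_of_one, kmsHom_of_two, map_transvection]
  · let g : Fin (n + 1) → f.range := fun m ↦ ⟨_, transvection_pow_mem_range_kmsHom p t m⟩
    have hg : Function.Injective g := by
      intro a b hab
      have := AdjoinRoot.root_X_pow_pow_injOn (R := ZMod p) k
        (Set.mem_Iio.2 (by omega)) (Set.mem_Iio.2 (by omega))
        (transvection_injective (by decide : (0 : Fin 3) ≠ 1) (Subtype.ext_iff.1 hab))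
      ext
      simpa using this
    have := Nat.card_le_card_of_injective g hg
    simp only [Nat.card_eq_fintype_card, Fintype.card_fin] at this
    omega

theorem kmsA2_quotients_general (p e : ℕ) [Fact p.Prime] :
    (∃ f : KMSA2 p →* Matrix.SpecialLinearGroup (Fin 3) (GaloisField p e),
      Function.Surjective f) ∧
    (∀ n : ℕ, ∃ (Q : Type) (_ : Group Q) (_ : Finite Q) (f : KMSA2 p →* Q),
      IsPGroup p Q ∧ Function.Surjective f ∧ n < Nat.card Q) := by
  obtain ⟨ξ, hξ⟩ := IsCyclic.exists_monoid_generator (α := (GaloisField p e)ˣ)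
  exact ⟨⟨_, kmsHom_surjective p hξ⟩, exists_isPGroup_quotient_card_gt p⟩

/-- For an odd prime p and e ≥ 3, the group G = 𝒢_{Ã₂}(p) surjects onto SL₃(𝔽_{p^e}),
and G has an infinite pro-p completion: it has arbitrarily large finite p-group
quotients. -/
theorem kmsA2_quotients (p e : ℕ) [Fact p.Prime] (hodd : Odd p) (he : 3 ≤ e) :
    (∃ f : KMSA2 p →* Matrix.SpecialLinearGroup (Fin 3) (GaloisField p e),
      Function.Surjective f) ∧
    (∀ n : ℕ, ∃ (Q : Type) (_ : Group Q) (_ : Finite Q) (f : KMSA2 p →* Q),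
      IsPGroup p Q ∧ Function.Surjective f ∧ n < Nat.card Q) :=
  kmsA2_quotients_general p e
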